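/- arXiv:2603.10729 — 2 statements merged into one kernel-verified Lean document; each statement's English description precedes it below -/
import Mathlib

section
/- Upper bound for intermediate dimensions of X = {1/n : n ≥ 1}: for every θ ∈ (0,1) and every s > θ/(1+θ), for every ε > 0 there exists, for all sufficiently small r ∈ (0,1), a cover {B_k} of X with all diameters in [r, r^θ] satisfying Σ_k |B_k|^s < ε. -/
open Set Metric

noncomputable section

/-- `coversWith X r n` : `X` can be covered by `n` sets each of diameter at most `r`. -/
def coversWith {α : Type*} [PseudoMetricSpace α] (X : Set α) (r : ℝ) (n : ℕ) : Prop :=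
  ∃ B : Fin n → Set α, (∀ i, EMetric.diam (B i) ≤ ENNReal.ofReal r) ∧ X ⊆ ⋃ i, B i

/-- The covering number `N_r(X)`: the minimal number of sets of diameter at most `r`
needed to cover `X`. -/
noncomputable def coverNum {α : Type*} [PseudoMetricSpace α] (X : Set α) (r : ℝ) : ℕ :=
  sInf {n : ℕ | coversWith X r n}

/-- Upper box dimension: infimum of `s ≥ 0` such that `N_r(X) ≤ C r^{-s}` for all `r ∈ (0,1)`. -/
noncomputable def upperBoxDim {α : Type*} [PseudoMetricSpace α] (X : Set α) : ℝ :=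
  sInf {s : ℝ | 0 ≤ s ∧ ∃ C > (0:ℝ), ∀ r ∈ Ioo (0:ℝ) 1,
    (coverNum X r : ℝ) ≤ C * r ^ (-s)}

/-- Assouad dimension (localisation at arbitrary centres `x`). -/
noncomputable def assouadDim {α : Type*} [PseudoMetricSpace α] (X : Set α) : ℝ :=
  sInf {s : ℝ | 0 ≤ s ∧ ∃ C > (0:ℝ), ∀ R > (0:ℝ), ∀ r ∈ Ioo (0:ℝ) R, ∀ x : α,
    (coverNum (X ∩ closedBall x R) r : ℝ) ≤ C * (R / r) ^ s}

/-- Assouad dimension (localisation at centres `x ∈ X`). -/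
noncomputable def assouadDimOn {α : Type*} [PseudoMetricSpace α] (X : Set α) : ℝ :=
  sInf {s : ℝ | 0 ≤ s ∧ ∃ C > (0:ℝ), ∀ R > (0:ℝ), ∀ r ∈ Ioo (0:ℝ) R, ∀ x ∈ X,
    (coverNum (X ∩ closedBall x R) r : ℝ) ≤ C * (R / r) ^ s}

/-- Upper θ-intermediate dimension, for `θ ∈ (0,1]`: infimum of `s ≥ 0` such that for all
`ε > 0` and all sufficiently small `δ ∈ (0,1)` there is a cover of `X` with all diameters in
`[δ^(1/θ), δ]` and `s`-cost less than `ε`. -/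
noncomputable def interDim {α : Type*} [PseudoMetricSpace α] (θ : ℝ) (X : Set α) : ℝ :=
  sInf {s : ℝ | 0 ≤ s ∧ ∀ ε > (0:ℝ), ∃ δ₀ ∈ Ioo (0:ℝ) 1, ∀ δ ∈ Ioo (0:ℝ) δ₀,
    ∃ n, ∃ B : Fin n → Set α, X ⊆ (⋃ i, B i) ∧
      (∀ i, Metric.diam (B i) ∈ Icc (δ ^ (1/θ)) δ) ∧
      ∑ i, Metric.diam (B i) ^ s < ε}

/-- Assouad spectrum at `θ` (localisation at arbitrary centres `x`). -/
noncomputable def assouadSpec {α : Type*} [PseudoMetricSpace α] (θ : ℝ) (X : Set α) : ℝ :=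
  sInf {s : ℝ | 0 ≤ s ∧ ∃ C > (0:ℝ), ∀ r ∈ Ioo (0:ℝ) 1, ∀ x : α,
    (coverNum (X ∩ closedBall x (r ^ θ)) r : ℝ) ≤ C * (r ^ θ / r) ^ s}

/-- Assouad spectrum at `θ` (localisation at centres `x ∈ X`). -/
noncomputable def assouadSpecOn {α : Type*} [PseudoMetricSpace α] (θ : ℝ) (X : Set α) : ℝ :=
  sInf {s : ℝ | 0 ≤ s ∧ ∃ C > (0:ℝ), ∀ r ∈ Ioo (0:ℝ) 1, ∀ x ∈ X,
    (coverNum (X ∩ closedBall x (r ^ θ)) r : ℝ) ≤ C * (r ^ θ / r) ^ s}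

/-- The set `X = {1/n : n ∈ ℕ, n ≥ 1} ⊆ ℝ`. -/
def recipSet : Set ℝ := {x : ℝ | ∃ n : ℕ, 1 ≤ n ∧ x = 1 / (n : ℝ)}

end

/-! Cover the `M = ⌊r^(-a)⌋` points `1/k`, `k ≤ M`, by intervals of length `r`, and the rest of
`X`, which lies in `[0, 1/(M+1)]`, by about `r^(a-θ)` intervals of length `r^θ`. The `s`-cost is
then at most `r^(s-a) + r^(a-θ+θs) + r^(θs)`, and `s > θ/(1+θ)` is exactly what allows a choice
`θ(1-s) < a < s` making all three exponents positive. -/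

open Filter Topology

lemma Fin.iUnion_append {α : Type*} {m n : ℕ} (A : Fin m → Set α) (B : Fin n → Set α) :
    ⋃ i, Fin.append A B i = (⋃ i, A i) ∪ ⋃ j, B j := by
  ext x
  simp only [mem_union, mem_iUnion]
  constructor
  · rintro ⟨i, hi⟩
    induction i using Fin.addCases with
    | left i => exact .inl ⟨i, by simpa using hi⟩
    | right j => exact .inr ⟨j, by simpa using hi⟩
  · rintro (⟨i, hi⟩ | ⟨j, hj⟩)
    · exact ⟨Fin.castAdd n i, by simpa using hi⟩
    · exact ⟨Fin.natAdd m j, by simpa using hj⟩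

lemma Icc_zero_subset_iUnion_Icc {L δ : ℝ} (hδ : 0 < δ) :
    Icc 0 L ⊆ ⋃ j : Fin (⌊L / δ⌋₊ + 1), Icc (j * δ) (j * δ + δ) := by
  rintro x ⟨hx0, hxL⟩
  have hxδ : 0 ≤ x / δ := div_nonneg hx0 hδ.le
  refine mem_iUnion.2 ⟨⟨⌊x / δ⌋₊, Nat.lt_succ_of_le (Nat.floor_mono ?_)⟩, ?_, ?_⟩
  · gcongr
  · simpa [le_div_iff₀ hδ] using Nat.floor_le hxδ
  · have := (div_lt_iff₀ hδ).1 (Nat.lt_floor_add_one (x / δ))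
    dsimp only
    linarith

lemma recipSet_subset_union_Icc (M : ℕ) :
    recipSet ⊆ (⋃ k : Fin M, {1 / ((k : ℝ) + 1)}) ∪ Icc 0 (1 / ((M : ℝ) + 1)) := by
  rintro _ ⟨n, hn, rfl⟩
  rcases lt_or_ge M n with hMn | hnM
  · refine .inr ⟨by positivity, one_div_le_one_div_of_le (by positivity) ?_⟩
    exact_mod_cast hMn
  · refine .inl (mem_iUnion.2 ⟨⟨n - 1, by omega⟩, ?_⟩)
    simp [Nat.cast_sub hn]

lemma exists_recipSet_cover (M : ℕ) {r δ s : ℝ} (hr : 0 ≤ r) (hrδ : r ≤ δ) (hδ : 0 < δ) :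
    ∃ n, ∃ B : Fin n → Set ℝ, recipSet ⊆ ⋃ i, B i ∧ (∀ i, diam (B i) ∈ Icc r δ) ∧
      ∑ i, diam (B i) ^ s ≤ M * r ^ s + (1 / ((M : ℝ) + 1) / δ + 1) * δ ^ s := by
  set K := ⌊1 / ((M : ℝ) + 1) / δ⌋₊ + 1
  refine ⟨M + K, Fin.append (fun k : Fin M => Icc (1 / ((k : ℝ) + 1)) (1 / ((k : ℝ) + 1) + r))
    (fun j : Fin K => Icc (j * δ) (j * δ + δ)), ?_, ?_, ?_⟩
  · rw [Fin.iUnion_append]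
    refine (recipSet_subset_union_Icc M).trans (union_subset_union (iUnion_mono fun k => ?_)
      (Icc_zero_subset_iUnion_Icc hδ))
    simpa using hr
  · refine Fin.addCases (fun k => ?_) (fun j => ?_) <;>
      simp [Real.diam_Icc, hr, hδ.le, hrδ]
  · have hK : (K : ℝ) ≤ 1 / ((M : ℝ) + 1) / δ + 1 := by
      simpa [K] using Nat.floor_le (a := 1 / ((M : ℝ) + 1) / δ) (by positivity)
    rw [Fin.sum_univ_add]
    simp only [Fin.append_left, Fin.append_right, Real.diam_Icc, le_add_iff_nonneg_right, hr,
      hδ.le, add_sub_cancel_left, Finset.sum_const, Finset.card_univ, Fintype.card_fin,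
      nsmul_eq_mul]
    gcongr

lemma recipSet_cover_cost_le {r : ℝ} (hr : 0 < r) (a s θ : ℝ) :
    ⌊r ^ (-a)⌋₊ * r ^ s + (1 / ((⌊r ^ (-a)⌋₊ : ℝ) + 1) / r ^ θ + 1) * (r ^ θ) ^ s ≤
      r ^ (s - a) + r ^ (a - θ + θ * s) + r ^ (θ * s) := by
  have hpos : 0 < r ^ (-a) := Real.rpow_pos_of_pos hr _
  have hM : (⌊r ^ (-a)⌋₊ : ℝ) * r ^ s ≤ r ^ (s - a) := by
    rw [sub_eq_neg_add, Real.rpow_add hr]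
    gcongr
    exact Nat.floor_le hpos.le
  have hM1 : 1 / ((⌊r ^ (-a)⌋₊ : ℝ) + 1) ≤ r ^ a := by
    rw [← inv_inv (r ^ a), ← Real.rpow_neg hr.le, one_div]
    exact inv_anti₀ hpos (Nat.lt_floor_add_one _).le
  have hθs : (r ^ θ) ^ s = r ^ (θ * s) := (Real.rpow_mul hr.le θ s).symm
  have hK : 1 / ((⌊r ^ (-a)⌋₊ : ℝ) + 1) / r ^ θ * (r ^ θ) ^ s ≤ r ^ (a - θ + θ * s) := by
    rw [hθs, Real.rpow_add hr, Real.rpow_sub hr]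
    gcongr
  linarith [add_mul (1 / ((⌊r ^ (-a)⌋₊ : ℝ) + 1) / r ^ θ) 1 ((r ^ θ) ^ s)]

lemma tendsto_rpow_nhdsGT_zero {p : ℝ} (hp : 0 < p) :
    Tendsto (fun r : ℝ => r ^ p) (𝓝[>] 0) (𝓝 0) := by
  simpa [Real.zero_rpow hp.ne'] using
    (Real.continuousAt_rpow_const 0 p (.inr hp.le)).tendsto.mono_left nhdsWithin_le_nhds

theorem stmt10 (θ : ℝ) (hθ : θ ∈ Ioo (0:ℝ) 1) (s : ℝ) (hs : θ / (1 + θ) < s)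
    (ε : ℝ) (hε : 0 < ε) :
    ∃ r₀ > (0:ℝ), ∀ r ∈ Ioo (0:ℝ) r₀, ∃ n, ∃ B : Fin n → Set ℝ,
      recipSet ⊆ (⋃ i, B i) ∧
      (∀ i, Metric.diam (B i) ∈ Icc r (r ^ θ)) ∧
      ∑ i, Metric.diam (B i) ^ s < ε := by
  obtain ⟨hθ0, hθ1⟩ := hθ
  have hs0 : 0 < s := (div_pos hθ0 (by linarith)).trans hs
  obtain ⟨a, hθa, has⟩ : ∃ a, θ * (1 - s) < a ∧ a < s :=
    exists_between (by rw [div_lt_iff₀ (by linarith)] at hs; linarith)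
  have hcost : Tendsto (fun r : ℝ => r ^ (s - a) + r ^ (a - θ + θ * s) + r ^ (θ * s))
      (𝓝[>] 0) (𝓝 0) := by
    simpa using ((tendsto_rpow_nhdsGT_zero (sub_pos.2 has)).add
      (tendsto_rpow_nhdsGT_zero (by linarith))).add
      (tendsto_rpow_nhdsGT_zero (mul_pos hθ0 hs0))
  obtain ⟨r₀, hr₀, hsmall⟩ := (nhdsGT_basis (0 : ℝ)).eventually_iff.1
    ((eventually_nhdsWithin_of_eventually_nhds (eventually_lt_nhds zero_lt_one)).and
      (hcost.eventually_lt_const hε))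
  refine ⟨r₀, hr₀, fun r hr => ?_⟩
  obtain ⟨hr1, hrε⟩ := hsmall hr
  have hr0 : 0 < r := hr.1
  obtain ⟨n, B, hcover, hdiam, hsum⟩ := exists_recipSet_cover ⌊r ^ (-a)⌋₊ (s := s) hr0.le
    (Real.self_le_rpow_of_le_one hr0.le hr1.le hθ1.le) (Real.rpow_pos_of_pos hr0 θ)
  exact ⟨n, B, hcover, hdiam, (hsum.trans (recipSet_cover_cost_le hr0 a s θ)).trans_lt hrε⟩
end

section
/- Let X = {1/n : n ∈ ℕ, n ≥ 1} ⊆ ℝ and θ ∈ (0,1). Then the Assouad spectrum of X at θ equals min{(1/2)/(1-θ), 1}. -/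
open Set Metric

/-! The points `1/n` with `n ≤ r^(-1/2)` are `r`-separated, while those below `√r` are
`r`-dense in `[0, √r]`. So for `r ≤ R` the set `recipSet ∩ closedBall x R` can be covered by
`3 * min R √r / r` sets of diameter `r`, and at `x = 0` it needs at least
`min R √r / (2 * r) - 1` of them. For `R = r ^ θ` the quantity `min R √r / r` is exactly
`(r ^ θ / r) ^ m` with `m = min (1/(2(1-θ))) 1`. -/

open Filter Topology

section Covering

variable {α : Type*} [PseudoMetricSpace α] {X Y : Set α} {r : ℝ} {k n m : ℕ}

lemma coversWith.mono (hXY : X ⊆ Y) (hY : coversWith Y r n) : coversWith X r n :=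
  let ⟨B, hB, hcov⟩ := hY
  ⟨B, hB, hXY.trans hcov⟩

lemma coverNum_le (h : coversWith X r n) : coverNum X r ≤ n :=
  Nat.sInf_le h

lemma coversWith.union (hX : coversWith X r n) (hY : coversWith Y r m) :
    coversWith (X ∪ Y) r (n + m) := by
  obtain ⟨B, hB, hBX⟩ := hX
  obtain ⟨D, hD, hDY⟩ := hY
  refine ⟨Fin.append B D, Fin.addCases (by simpa using hB) (by simpa using hD), ?_⟩
  rintro x (hx | hx)
  · obtain ⟨i, hi⟩ := mem_iUnion.mp (hBX hx)
    exact mem_iUnion.mpr ⟨Fin.castAdd m i, by simpa using hi⟩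
  · obtain ⟨i, hi⟩ := mem_iUnion.mp (hDY hx)
    exact mem_iUnion.mpr ⟨Fin.natAdd n i, by simpa using hi⟩

lemma coversWith_range (g : Fin n → α) : coversWith (range g) r n :=
  ⟨fun i => {g i}, fun _ => Metric.ediam_singleton.trans_le bot_le, by simp⟩

lemma card_le_of_coversWith {f : Fin k → α} (hr : 0 ≤ r) (hfX : ∀ i, f i ∈ X)
    (hf : Pairwise fun i j => r < dist (f i) (f j)) (hX : coversWith X r n) : k ≤ n := by
  obtain ⟨B, hB, hcov⟩ := hX
  choose g hg using fun i => mem_iUnion.mp (hcov (hfX i))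
  suffices Function.Injective g by simpa using Fintype.card_le_of_injective g this
  intro i j hij
  by_contra hne
  have hle : edist (f i) (f j) ≤ ENNReal.ofReal r :=
    (Metric.edist_le_ediam_of_mem (hg i) (hij ▸ hg j)).trans (hB _)
  exact (hf hne).not_ge ((edist_le_ofReal hr).mp hle)

lemma le_coverNum_of_pairwise {f : Fin k → α} (hr : 0 ≤ r) (hfX : ∀ i, f i ∈ X)
    (hf : Pairwise fun i j => r < dist (f i) (f j)) (hX : ∃ n, coversWith X r n) :
    k ≤ coverNum X r :=
  card_le_of_coversWith hr hfX hf (Nat.sInf_mem hX)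

end Covering

section RealLine

variable {r : ℝ}

lemma coversWith_Icc (hr : 0 < r) (a b : ℝ) : coversWith (Icc a b) r (⌊(b - a) / r⌋₊ + 1) := by
  refine ⟨fun j => Icc (a + j * r) (a + j * r + r), fun j => ?_, fun y ⟨hay, hyb⟩ => ?_⟩
  · exact (Real.ediam_Icc _ _).trans_le (by simp)
  have hya : 0 ≤ (y - a) / r := div_nonneg (by linarith) hr.le
  have hj : ⌊(y - a) / r⌋₊ < ⌊(b - a) / r⌋₊ + 1 :=
    Nat.lt_succ_of_le (Nat.floor_le_floor (by gcongr))
  refine mem_iUnion.mpr ⟨⟨_, hj⟩, ?_, ?_⟩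
  · have := (le_div_iff₀ hr).mp (Nat.floor_le hya)
    simp only
    linarith
  · have := (div_lt_iff₀ hr).mp (Nat.lt_floor_add_one ((y - a) / r))
    simp only
    linarith

lemma coverNum_inter_closedBall_le (X : Set ℝ) (x : ℝ) {R : ℝ} (hr : 0 < r) (hrR : r ≤ R) :
    (coverNum (X ∩ closedBall x R) r : ℝ) ≤ 3 * (R / r) := by
  have hcov : coversWith (X ∩ closedBall x R) r (⌊(x + R - (x - R)) / r⌋₊ + 1) :=
    (coversWith_Icc hr _ _).mono (inter_subset_right.trans Real.closedBall_eq_Icc.subset)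
  rw [show x + R - (x - R) = 2 * R by ring] at hcov
  have h1 : 1 ≤ R / r := (one_le_div hr).mpr hrR
  calc (coverNum (X ∩ closedBall x R) r : ℝ) ≤ ⌊2 * R / r⌋₊ + 1 := by
        exact_mod_cast coverNum_le hcov
    _ ≤ 2 * R / r + 1 := by gcongr; exact Nat.floor_le (div_nonneg (by linarith) hr.le)
    _ ≤ 3 * (R / r) := by rw [mul_div_assoc]; linarith

lemma le_coverNum_of_forall_exists_mem_Ioc {X : Set ℝ} {ρ : ℝ} (hr : 0 < r)
    (hX : ∀ t ∈ Icc (2 * r) ρ, ∃ p ∈ X, p ∈ Ioc (t - r) t) (hcov : ∃ n, coversWith X r n) :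
    ρ / (2 * r) - 1 ≤ coverNum X r := by
  set K := ⌊ρ / (2 * r)⌋₊
  have ht : ∀ j : Fin K, ρ - 2 * j * r ∈ Icc (2 * r) ρ := fun j => by
    have hjK : (j + 1 : ℝ) ≤ K := by exact_mod_cast j.isLt
    have hKρ : (K : ℝ) * (2 * r) ≤ ρ :=
      (le_div_iff₀ (by positivity)).mp (Nat.floor_le (Nat.pos_of_floor_pos j.pos).le)
    constructor <;> nlinarith [j.val.cast_nonneg (α := ℝ)]
  choose p hpX hp using fun j : Fin K => hX _ (ht j)
  have hsep : ∀ i j : Fin K, i < j → r < dist (p i) (p j) := fun i j hij => by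
    have : (i + 1 : ℝ) ≤ j := by exact_mod_cast hij
    rw [Real.dist_eq]
    nlinarith [(hp i).1, (hp j).2, le_abs_self (p i - p j)]
  have hK : K ≤ coverNum X r :=
    le_coverNum_of_pairwise hr.le hpX (fun i j hij => hij.lt_or_gt.elim (hsep i j)
      fun h => (hsep j i h).trans_eq (dist_comm _ _)) hcov
  have := Nat.sub_one_lt_floor (ρ / (2 * r))
  have : (K : ℝ) ≤ coverNum X r := by exact_mod_cast hK
  linarith

end RealLine

section RecipSet

variable {r : ℝ}

lemma one_div_mem_recipSet {n : ℕ} (hn : 1 ≤ n) : 1 / (n : ℝ) ∈ recipSet := ⟨n, hn, rfl⟩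

lemma recipSet_subset_range_union_Icc (N : ℕ) :
    recipSet ⊆ range (fun i : Fin N => 1 / ((i : ℕ) + 1 : ℝ)) ∪ Icc 0 (1 / (N + 1)) := by
  rintro _ ⟨n, hn, rfl⟩
  rcases le_or_gt n N with h | h
  · exact Or.inl ⟨⟨n - 1, by omega⟩, by simp [Nat.cast_sub hn]⟩
  · exact Or.inr ⟨by positivity, one_div_le_one_div_of_le (by positivity) (by exact_mod_cast h)⟩

lemma exists_coversWith_recipSet (hr0 : 0 < r) (hr1 : r ≤ 1) :
    ∃ n, coversWith recipSet r n ∧ (n : ℝ) ≤ 3 * (√r / r) := by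
  set N := ⌊1 / √r⌋₊
  refine ⟨_, ((coversWith_range _).union (coversWith_Icc hr0 0 (1 / (N + 1)))).mono
    (recipSet_subset_range_union_Icc N), ?_⟩
  have hs : 0 < √r := Real.sqrt_pos.mpr hr0
  have hsr : √r / r = 1 / √r := by
    rw [div_eq_div_iff hr0.ne' hs.ne', one_mul, Real.mul_self_sqrt hr0.le]
  have h1 : 1 ≤ 1 / √r := one_le_one_div hs (Real.sqrt_le_one.mpr hr1)
  have hN : (N : ℝ) ≤ 1 / √r := Nat.floor_le (by positivity)
  have hN' : 1 / √r < N + 1 := Nat.lt_floor_add_one _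
  have htail : (1 / (N + 1) - 0) / r ≤ 1 / √r := by
    rw [sub_zero, ← hsr]
    gcongr
    exact ((one_div_lt hs (by positivity)).mp hN').le
  have := Nat.floor_le (a := (1 / (N + 1 : ℝ) - 0) / r) (by rw [sub_zero]; positivity)
  push_cast
  linarith

lemma coverNum_recipSet_inter_closedBall_le (x : ℝ) {R : ℝ} (hr0 : 0 < r) (hr1 : r ≤ 1)
    (hrR : r ≤ R) : (coverNum (recipSet ∩ closedBall x R) r : ℝ) ≤ 3 * (min R √r / r) := by
  obtain ⟨n, hcov, hn⟩ := exists_coversWith_recipSet hr0 hr1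
  rw [← min_div_div_right hr0.le, mul_min_of_nonneg _ _ (by norm_num)]
  exact le_min (coverNum_inter_closedBall_le _ x hr0 hrR)
    ((Nat.cast_le.mpr (coverNum_le (hcov.mono inter_subset_left))).trans hn)

lemma exists_mem_recipSet_Ioc {t : ℝ} (ht0 : 0 < t) :
    ∃ p ∈ recipSet, p ∈ Ioc (t - t ^ 2) t := by
  have hn : 1 ≤ ⌈1 / t⌉₊ := Nat.one_le_ceil_iff.mpr (by positivity)
  have hn0 : (0 : ℝ) < ⌈1 / t⌉₊ := by exact_mod_cast hn
  refine ⟨_, one_div_mem_recipSet hn, ?_, ?_⟩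
  · have hlt := Nat.ceil_lt_add_one (one_div_pos.mpr ht0).le
    have : (t - t ^ 2) * (1 / t + 1) = 1 - t ^ 2 := by field_simp; ring
    rw [lt_div_iff₀ hn0]
    nlinarith
  · rw [div_le_iff₀ hn0, ← div_le_iff₀' ht0]
    exact Nat.le_ceil _

lemma le_coverNum_recipSet_inter_closedBall {R : ℝ} (hr0 : 0 < r) (hr1 : r ≤ 1) :
    min R √r / (2 * r) - 1 ≤ coverNum (recipSet ∩ closedBall 0 R) r := by
  obtain ⟨n, hcov, -⟩ := exists_coversWith_recipSet hr0 hr1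
  refine le_coverNum_of_forall_exists_mem_Ioc hr0 (fun t ⟨h2r, htρ⟩ => ?_)
    ⟨n, hcov.mono inter_subset_left⟩
  have ht0 : 0 < t := by linarith
  have hts : t ≤ √r := htρ.trans (min_le_right _ _)
  obtain ⟨p, hp, hpt⟩ := exists_mem_recipSet_Ioc ht0
  have ht2 : t ^ 2 ≤ r := (Real.le_sqrt ht0.le hr0.le).mp hts
  refine ⟨p, ⟨hp, ?_⟩, by linarith [hpt.1], hpt.2⟩
  rw [mem_closedBall, Real.dist_eq, sub_zero, abs_le]
  constructor <;> linarith [hpt.1, hpt.2, htρ.trans (min_le_left _ _)]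

end RecipSet

lemma min_rpow_sqrt_div_self {r θ : ℝ} (hr0 : 0 < r) (hr1 : r ≤ 1) (hθ : θ < 1) :
    min (r ^ θ) √r / r = (r ^ θ / r) ^ min ((1 / 2) / (1 - θ)) 1 := by
  have hdiv : ∀ a : ℝ, r ^ a / r = r ^ (a - 1) := fun a => by rw [Real.rpow_sub hr0, Real.rpow_one]
  rw [Real.sqrt_eq_rpow]
  rcases le_or_gt θ (1 / 2) with hθ2 | hθ2
  · rw [min_eq_right (Real.rpow_le_rpow_of_exponent_ge hr0 hr1 hθ2),
      min_eq_left ((div_le_one (by linarith)).mpr (by linarith)), hdiv, hdiv,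
      ← Real.rpow_mul hr0.le]
    have h1θ : 1 - θ ≠ 0 := by linarith
    congr 1
    field_simp
    ring
  · rw [min_eq_left (Real.rpow_le_rpow_of_exponent_ge hr0 hr1 hθ2.le),
      min_eq_right ((le_div_iff₀ (by linarith)).mpr (by linarith)), Real.rpow_one]

lemma le_of_eventually_rpow_le {ι : Type*} {l : Filter ι} [l.NeBot] {u : ι → ℝ}
    (hu : Tendsto u l atTop) {m s c C : ℝ} (hc : 0 < c) (hs : 0 ≤ s)
    (h : ∀ᶠ i in l, c * u i ^ m - 1 ≤ C * u i ^ s) : m ≤ s := by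
  by_contra! hsm
  have hgrow : Tendsto (fun i => u i ^ (m - s)) l atTop :=
    (tendsto_rpow_atTop (sub_pos.mpr hsm)).comp hu
  obtain ⟨i, hi, hu1, hbig⟩ := (h.and ((hu.eventually_ge_atTop 1).and
    (hgrow.eventually_gt_atTop ((C + 1) / c)))).exists
  have hus : 1 ≤ u i ^ s := Real.one_le_rpow hu1 hs
  have hm : u i ^ m = u i ^ (m - s) * u i ^ s := by
    rw [← Real.rpow_add (by linarith)]
    ring_nf
  have := (div_lt_iff₀ hc).mp hbig
  nlinarith

theorem stmt12 (θ : ℝ) (hθ : θ ∈ Ioo (0:ℝ) 1) :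
    assouadSpec θ recipSet = min ((1/2) / (1 - θ)) 1 := by
  have hθ1 := hθ.2
  have hdim : ∀ r ∈ Ioo (0:ℝ) 1,
      min (r ^ θ) √r / r = (r ^ θ / r) ^ min ((1 / 2) / (1 - θ)) 1 :=
    fun r hr => min_rpow_sqrt_div_self hr.1 hr.2.le hθ1
  refine IsLeast.csInf_eq ⟨⟨le_min (div_nonneg (by norm_num) (by linarith)) zero_le_one,
    3, by norm_num, fun r hr x => ?_⟩, ?_⟩
  · rw [← hdim r hr]
    refine coverNum_recipSet_inter_closedBall_le x hr.1 hr.2.le ?_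
    simpa using Real.rpow_le_rpow_of_exponent_ge hr.1 hr.2.le hθ1.le
  · rintro s ⟨hs, C, -, hC⟩
    have hu : Tendsto (fun r : ℝ => r ^ θ / r) (𝓝[>] 0) atTop :=
      (tendsto_rpow_neg_nhdsGT_zero (by linarith : θ - 1 < 0)).congr'
        (eventually_mem_nhdsWithin.mono fun r hr => by
          rw [Real.rpow_sub hr, Real.rpow_one])
    refine le_of_eventually_rpow_le hu one_half_pos hs (C := C) ?_
    filter_upwards [Ioo_mem_nhdsGT one_pos] with r hr
    have := le_coverNum_recipSet_inter_closedBall (R := r ^ θ) hr.1 hr.2.le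
    rw [div_mul_eq_div_div_swap, hdim r hr] at this
    linarith [hC r hr 0]
end
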